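/- arXiv:1205.7023 — 2 statements merged into one kernel-verified Lean document; each statement's English description precedes it below -/
import Mathlib

section
/- On an oriented Riemannian 3-manifold with orthonormal coframing η = (η₁,η₂,η₃), the condition d(⋆η) = 0 (i.e. d(η₂∧η₃) = d(η₃∧η₁) = d(η₁∧η₂) = 0) is equivalent to the statement that the connection 1-forms θ_{ij} defined by dη_i = −θ_{ij}∧η_j, θ_{ij} = −θ_{ji}, satisfy θ_{ij} = ε_{ijk} S_{kl} η_l for some symmetric matrix-valued function S = (S_{kl}). -/
/- STATEMENT 7: On an oriented Riemannian 3-manifold with orthonormal coframing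
η = (η₁,η₂,η₃), the condition d(⋆η) = 0 (i.e. d(η₂∧η₃) = d(η₃∧η₁) = d(η₁∧η₂) = 0)
is equivalent to: the connection 1-forms θ_{ij} (dη_i = −θ_{ij}∧η_j, θ_{ij} = −θ_{ji})
satisfy θ_{ij} = ε_{ijk} S_{kl} η_l for some symmetric matrix-valued function S.

We work in the local model N = ℝ³.  A 1-form is recorded by its coefficient functions:
η i has coefficients x ↦ η x i, so that η_i = ∑_a (η x i a) dxᵃ; similarly
θ_{ij} = ∑_a (θ x i j a) dxᵃ.  Exterior derivatives are written out in coordinates: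
(dα)_{ab} = ∂_a α_b − ∂_b α_a for a 1-form, and a 2-form with (antisymmetric)
coefficients c_{ab} is closed iff ∂₀c₁₂ + ∂₁c₂₀ + ∂₂c₀₁ = 0. -/

/-- partial derivative in direction j -/
noncomputable def pd (j : Fin 3) (f : (Fin 3 → ℝ) → ℝ) (x : Fin 3 → ℝ) : ℝ :=
  fderiv ℝ f x (Pi.single j 1)

/-- Levi-Civita symbol ε_{ijk} on Fin 3 (ε₀₁₂ = 1 in 0-based indexing) -/
noncomputable def eps (i j k : Fin 3) : ℝ :=
  (((j : ℤ) - i) * ((k : ℤ) - i) * ((k : ℤ) - j) : ℤ) / 2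

/-- coefficients of η_j ∧ η_k -/
noncomputable def wcoef (η : (Fin 3 → ℝ) → Fin 3 → Fin 3 → ℝ) (j k : Fin 3)
    (x : Fin 3 → ℝ) (a b : Fin 3) : ℝ :=
  η x j a * η x k b - η x j b * η x k a


noncomputable def Amat (η : (Fin 3 → ℝ) → Fin 3 → Fin 3 → ℝ) (x : Fin 3 → ℝ) :
    Matrix (Fin 3) (Fin 3) ℝ := Matrix.of fun i a => η x i a

noncomputable def Tco (η : (Fin 3 → ℝ) → Fin 3 → Fin 3 → ℝ)
    (θ : (Fin 3 → ℝ) → Fin 3 → Fin 3 → Fin 3 → ℝ)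
    (x : Fin 3 → ℝ) (i j : Fin 3) : Fin 3 → ℝ :=
  Matrix.vecMul (fun a => θ x i j a) (Amat η x)⁻¹

noncomputable def Sco (η : (Fin 3 → ℝ) → Fin 3 → Fin 3 → ℝ)
    (θ : (Fin 3 → ℝ) → Fin 3 → Fin 3 → Fin 3 → ℝ)
    (x : Fin 3 → ℝ) (k l : Fin 3) : ℝ :=
  (∑ i, ∑ j, eps k i j * Tco η θ x i j l) / 2

lemma theta_eq_T (η : (Fin 3 → ℝ) → Fin 3 → Fin 3 → ℝ)
    (θ : (Fin 3 → ℝ) → Fin 3 → Fin 3 → Fin 3 → ℝ) (x : Fin 3 → ℝ)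
    (hD : (Amat η x).det ≠ 0) (i j a : Fin 3) :
    θ x i j a = ∑ l, Tco η θ x i j l * η x l a := by
  have hA : IsUnit (Amat η x).det := isUnit_iff_ne_zero.mpr hD
  have h1 : (Amat η x)⁻¹ * (Amat η x) = 1 := Matrix.nonsing_inv_mul _ hA
  have h2 : Matrix.vecMul (Tco η θ x i j) (Amat η x) = fun a => θ x i j a := by
    rw [Tco, Matrix.vecMul_vecMul, h1, Matrix.vecMul_one]
  calc θ x i j a = Matrix.vecMul (Tco η θ x i j) (Amat η x) a := by rw [h2]
    _ = ∑ l, Tco η θ x i j l * η x l a := by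
        simp [Matrix.vecMul, dotProduct, Amat]

lemma T_anti (η : (Fin 3 → ℝ) → Fin 3 → Fin 3 → ℝ)
    (θ : (Fin 3 → ℝ) → Fin 3 → Fin 3 → Fin 3 → ℝ)
    (hθanti : ∀ x i j a, θ x i j a = -θ x j i a) (x : Fin 3 → ℝ) (i j l : Fin 3) :
    Tco η θ x i j l = -Tco η θ x j i l := by
  have : (fun a => θ x i j a) = -(fun a => θ x j i a) := funext fun a => hθanti x i j a
  rw [Tco, this, Matrix.neg_vecMul, Tco]
  simp

lemma T_of_S (η : (Fin 3 → ℝ) → Fin 3 → Fin 3 → ℝ)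
    (θ : (Fin 3 → ℝ) → Fin 3 → Fin 3 → Fin 3 → ℝ) (x : Fin 3 → ℝ)
    (hD : (Amat η x).det ≠ 0) (S : (Fin 3 → ℝ) → Fin 3 → Fin 3 → ℝ)
    (hrep : ∀ i j a, θ x i j a = ∑ k, ∑ l, eps i j k * S x k l * η x l a)
    (i j l : Fin 3) :
    Tco η θ x i j l = ∑ p, eps i j p * S x p l := by
  have hA : IsUnit (Amat η x).det := isUnit_iff_ne_zero.mpr hD
  have h1 : (Amat η x) * (Amat η x)⁻¹ = 1 := Matrix.mul_nonsing_inv _ hA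
  have h2 : (fun a => θ x i j a) =
      Matrix.vecMul (fun l => ∑ p, eps i j p * S x p l) (Amat η x) := by
    funext a
    rw [hrep i j a, Finset.sum_comm]
    simp [Matrix.vecMul, dotProduct, Amat, Finset.sum_mul]
  have : Tco η θ x i j = fun l => ∑ p, eps i j p * S x p l := by
    rw [Tco, h2, Matrix.vecMul_vecMul, h1, Matrix.vecMul_one]
  rw [this]

lemma lemA (η : (Fin 3 → ℝ) → Fin 3 → Fin 3 → ℝ)
    (θ : (Fin 3 → ℝ) → Fin 3 → Fin 3 → Fin 3 → ℝ)
    (hθanti : ∀ x i j a, θ x i j a = -θ x j i a) (x : Fin 3 → ℝ)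
    (hD : (Amat η x).det ≠ 0) (i j a : Fin 3) :
    θ x i j a = ∑ k, ∑ l, eps i j k * Sco η θ x k l * η x l a := by
  have h : ∀ l, (∑ k, eps i j k * Sco η θ x k l) = Tco η θ x i j l := by
    intro l
    have hT : ∀ p q : Fin 3, Tco η θ x p q l = -Tco η θ x q p l :=
      fun p q => T_anti η θ hθanti x p q l
    fin_cases i <;> fin_cases j <;>
      simp [Sco, eps, Fin.sum_univ_three] <;>
      norm_num <;>
      linarith [hT 0 1, hT 0 2, hT 1 2, hT 0 0, hT 1 1, hT 2 2]
  rw [theta_eq_T η θ x hD i j a, Finset.sum_comm]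
  exact (Finset.sum_congr rfl fun l _ => by rw [← h l, Finset.sum_mul]).symm

lemma Suniq (η : (Fin 3 → ℝ) → Fin 3 → Fin 3 → ℝ)
    (θ : (Fin 3 → ℝ) → Fin 3 → Fin 3 → Fin 3 → ℝ) (x : Fin 3 → ℝ)
    (hD : (Amat η x).det ≠ 0) (S : (Fin 3 → ℝ) → Fin 3 → Fin 3 → ℝ)
    (hrep : ∀ i j a, θ x i j a = ∑ k, ∑ l, eps i j k * S x k l * η x l a)
    (k l : Fin 3) : Sco η θ x k l = S x k l := by
  have hT : ∀ i j, Tco η θ x i j l = ∑ p, eps i j p * S x p l :=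
    fun i j => T_of_S η θ x hD S hrep i j l
  rw [Sco]
  fin_cases k <;>
    simp [hT, eps, Fin.sum_univ_three] <;> norm_num

lemma pd_wcoef (η : (Fin 3 → ℝ) → Fin 3 → Fin 3 → ℝ)
    (hηs : ∀ i a, ContDiff ℝ (⊤ : ℕ∞) fun x => η x i a) (j k a b c : Fin 3) (x : Fin 3 → ℝ) :
    pd c (fun y => wcoef η j k y a b) x =
      pd c (fun y => η y j a) x * η x k b + η x j a * pd c (fun y => η y k b) x
      - (pd c (fun y => η y j b) x * η x k a + η x j b * pd c (fun y => η y k a) x) := by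
  have h1 : DifferentiableAt ℝ (fun y => η y j a) x := ((hηs j a).differentiable (by simp)).differentiableAt
  have h2 : DifferentiableAt ℝ (fun y => η y k b) x := ((hηs k b).differentiable (by simp)).differentiableAt
  have h3 : DifferentiableAt ℝ (fun y => η y j b) x := ((hηs j b).differentiable (by simp)).differentiableAt
  have h4 : DifferentiableAt ℝ (fun y => η y k a) x := ((hηs k a).differentiable (by simp)).differentiableAt
  simp only [pd, wcoef]
  rw [fderiv_fun_sub (show DifferentiableAt ℝ (fun y => η y j a * η y k b) x from h1.mul h2)
    (show DifferentiableAt ℝ (fun y => η y j b * η y k a) x from h3.mul h4), fderiv_fun_mul h1 h2, fderiv_fun_mul h3 h4]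
  simp only [ContinuousLinearMap.coe_sub', Pi.sub_apply, ContinuousLinearMap.add_apply,
    ContinuousLinearMap.coe_smul', Pi.smul_apply, smul_eq_mul]
  ring

lemma fin_mk_two (h : 2 < 3) : (⟨2, h⟩ : Fin 3) = 2 := rfl

set_option maxHeartbeats 2000000 in
lemma lemC (η : (Fin 3 → ℝ) → Fin 3 → Fin 3 → ℝ)
    (θ : (Fin 3 → ℝ) → Fin 3 → Fin 3 → Fin 3 → ℝ)
    (hηs : ∀ i a, ContDiff ℝ (⊤ : ℕ∞) fun x => η x i a)
    (hθanti : ∀ x i j a, θ x i j a = -θ x j i a)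
    (hstr : ∀ x i a b,
      pd a (fun y => η y i b) x - pd b (fun y => η y i a) x =
        -∑ j, (θ x i j a * η x j b - θ x i j b * η x j a))
    (x : Fin 3 → ℝ) (hD : (Amat η x).det ≠ 0) (j k : Fin 3) :
    pd 0 (fun y => wcoef η j k y 1 2) x + pd 1 (fun y => wcoef η j k y 2 0) x
      + pd 2 (fun y => wcoef η j k y 0 1) x
    = (Amat η x).det * (Sco η θ x j k - Sco η θ x k j) := by
  have hE : pd 0 (fun y => wcoef η j k y 1 2) x + pd 1 (fun y => wcoef η j k y 2 0) x
      + pd 2 (fun y => wcoef η j k y 0 1) x =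
      -((∑ m, (θ x j m 0 * η x m 1 - θ x j m 1 * η x m 0)) * η x k 2
        + (∑ m, (θ x j m 1 * η x m 2 - θ x j m 2 * η x m 1)) * η x k 0
        + (∑ m, (θ x j m 2 * η x m 0 - θ x j m 0 * η x m 2)) * η x k 1
        + (∑ m, (θ x k m 0 * η x m 2 - θ x k m 2 * η x m 0)) * η x j 1
        + (∑ m, (θ x k m 1 * η x m 0 - θ x k m 0 * η x m 1)) * η x j 2
        + (∑ m, (θ x k m 2 * η x m 1 - θ x k m 1 * η x m 2)) * η x j 0) := by
    rw [pd_wcoef η hηs j k 1 2 0 x, pd_wcoef η hηs j k 2 0 1 x, pd_wcoef η hηs j k 0 1 2 x]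
    linear_combination (η x k 2) * hstr x j 0 1 + (η x k 0) * hstr x j 1 2 +
      (η x k 1) * hstr x j 2 0 + (η x j 1) * hstr x k 0 2 +
      (η x j 2) * hstr x k 1 0 + (η x j 0) * hstr x k 2 1
  rw [hE]
  have hθS : ∀ i m a, θ x i m a = ∑ p, ∑ l, eps i m p * Sco η θ x p l * η x l a :=
    fun i m a => lemA η θ hθanti x hD i m a
  simp only [hθS, Fin.sum_univ_three, Amat, Matrix.det_fin_three, Matrix.of_apply]
  fin_cases j <;> fin_cases k <;> norm_num [eps, fin_mk_two] <;> ring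

theorem stmt7 (η : (Fin 3 → ℝ) → Fin 3 → Fin 3 → ℝ)
    (θ : (Fin 3 → ℝ) → Fin 3 → Fin 3 → Fin 3 → ℝ)
    (hηs : ∀ i a, ContDiff ℝ (⊤ : ℕ∞) fun x => η x i a)
    (hθs : ∀ i j a, ContDiff ℝ (⊤ : ℕ∞) fun x => θ x i j a)
    -- η is a coframing
    (hcof : ∀ x, (Matrix.of fun i a => η x i a).det ≠ 0)
    -- θ_{ij} = −θ_{ji}
    (hθanti : ∀ x i j a, θ x i j a = -θ x j i a)
    -- first structure equation dη_i = −θ_{ij} ∧ η_j, in coefficients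
    (hstr : ∀ x i a b,
      pd a (fun y => η y i b) x - pd b (fun y => η y i a) x =
        -∑ j, (θ x i j a * η x j b - θ x i j b * η x j a)) :
    -- d(⋆η) = 0, i.e. each η_j∧η_k is closed, iff θ_{ij} = ε_{ijk} S_{kl} η_l, S symmetric
    ((∀ j k : Fin 3, ∀ x,
        pd 0 (fun y => wcoef η j k y 1 2) x + pd 1 (fun y => wcoef η j k y 2 0) x
          + pd 2 (fun y => wcoef η j k y 0 1) x = 0) ↔
      (∃ S : (Fin 3 → ℝ) → Fin 3 → Fin 3 → ℝ,
        (∀ x k l, S x k l = S x l k) ∧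
        (∀ x i j a, θ x i j a = ∑ k, ∑ l, eps i j k * S x k l * η x l a))) := by
  constructor
  · intro hcl
    refine ⟨Sco η θ, fun x k l => ?_, fun x i j a => lemA η θ hθanti x (hcof x) i j a⟩
    have hD : (Amat η x).det ≠ 0 := hcof x
    have h1 := lemC η θ hηs hθanti hstr x hD k l
    rw [hcl k l x] at h1
    have h2 : Sco η θ x k l - Sco η θ x l k = 0 := by
      rcases mul_eq_zero.mp h1.symm with h | h
      · exact absurd h hD
      · exact h
    linarith
  · rintro ⟨S, hsym, hrep⟩ j k x
    have hD : (Amat η x).det ≠ 0 := hcof x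
    rw [lemC η θ hηs hθanti hstr x hD j k,
        Suniq η θ x hD S (hrep x) j k, Suniq η θ x hD S (hrep x) k j, hsym x j k]
    ring
end

section
/- Any linear map A ∈ GL(7,ℝ) that preserves the G₂ 3-form φ (i.e. A*φ = φ) preserves the standard inner product and the standard orientation of ℝ⁷; that is, the stabilizer of φ in GL(7,ℝ) is contained in SO(7). -/
/-!
In any frame `u` of a module, write `φ_u` for the `G₂` 3-form in that frame and
`vol_u = u₀ ∧ ⋯ ∧ u₆`. Contracting with covectors `g, h` gives
`(g ⌟ φ_u) ∧ (h ⌟ φ_u) ∧ φ_u = 6 (∑ᵢ g(uᵢ) h(uᵢ)) vol_u`. If `A` fixes `φ`, then `φ` is also the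
`G₂` form in the frame `(A eᵢ)`, and comparing the coefficients of `e₀ ∧ ⋯ ∧ e₆` in the two
expansions gives `det A · A Aᵀ = 1`. Taking determinants, `(det A)⁹ = 1`, so `det A = 1` and
`A Aᵀ = 1`.
-/

/- Forms on ℝ⁷ are modeled in the exterior algebra of ℝ⁷ (standard basis identifying ℝ⁷
with its dual, indices 0-based); A preserves φ iff the induced algebra map fixes φ.
Orthogonality is ⟨Av,Aw⟩ = ⟨v,w⟩ and orientation-preservation (given orthogonality) is
det A = 1. -/
open ExteriorAlgebra

noncomputable def e (i : Fin 7) : ExteriorAlgebra ℝ (Fin 7 → ℝ) :=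
  ExteriorAlgebra.ι ℝ (Pi.single i 1)

noncomputable def φ₀ : ExteriorAlgebra ℝ (Fin 7 → ℝ) :=
  e 0 * e 1 * e 2 + e 0 * e 3 * e 4 + e 0 * e 5 * e 6 + e 1 * e 3 * e 5
    - e 1 * e 4 * e 6 - e 2 * e 3 * e 6 - e 2 * e 4 * e 5

open CliffordAlgebra (contractLeft contractLeft_ι contractLeft_ι_mul)
open scoped Matrix

variable {R M : Type*} [CommRing R] [AddCommGroup M] [Module R M]

namespace ExteriorAlgebra

theorem ι_mul_ι_swap (x y : M) : ι R x * ι R y = -(ι R y * ι R x) :=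
  eq_neg_of_add_eq_zero_left (ι_add_mul_swap x y)

theorem ι_mul_ι_mul_swap (x y : M) (z : ExteriorAlgebra R M) :
    ι R x * (ι R y * z) = -(ι R y * (ι R x * z)) := by
  rw [← mul_assoc, ι_mul_ι_swap, neg_mul, mul_assoc]

theorem ι_mul_ι_mul_self (x : M) (z : ExteriorAlgebra R M) : ι R x * (ι R x * z) = 0 := by
  rw [← mul_assoc, ι_sq_zero, zero_mul]

end ExteriorAlgebra

variable (R) in
noncomputable def g2Form (u : Fin 7 → M) : ExteriorAlgebra R M :=
  ι R (u 0) * ι R (u 1) * ι R (u 2) + ι R (u 0) * ι R (u 3) * ι R (u 4)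
    + ι R (u 0) * ι R (u 5) * ι R (u 6) + ι R (u 1) * ι R (u 3) * ι R (u 5)
    - ι R (u 1) * ι R (u 4) * ι R (u 6) - ι R (u 2) * ι R (u 3) * ι R (u 6)
    - ι R (u 2) * ι R (u 4) * ι R (u 5)

/-- `ωᵢ = uᵢ* ⌟ φ_u`, the contraction of the `G₂` form with the `i`-th dual frame covector. -/
noncomputable def g2TwoForm (u : Fin 7 → M) : Fin 7 → ExteriorAlgebra R M :=
  let w i j := ι R (u i) * ι R (u j)
  ![w 1 2 + w 3 4 + w 5 6, -w 0 2 + w 3 5 - w 4 6, w 0 1 - w 3 6 - w 4 5,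
    -w 0 4 - w 1 5 + w 2 6, w 0 3 + w 1 6 + w 2 5, -w 0 6 + w 1 3 - w 2 4, w 0 5 - w 1 4 - w 2 3]

/-- The Hodge duals `⋆ωᵢ` of the 2-forms `g2TwoForm u i`, for the metric in which
`u` is orthonormal. -/
noncomputable def g2FiveForm (u : Fin 7 → M) : Fin 7 → ExteriorAlgebra R M :=
  let w i j k l m := ι R (u i) * (ι R (u j) * (ι R (u k) * (ι R (u l) * ι R (u m))))
  ![w 0 1 2 3 4 + w 0 1 2 5 6 + w 0 3 4 5 6, w 0 1 2 3 5 - w 0 1 2 4 6 + w 1 3 4 5 6,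
    -w 0 1 2 3 6 - w 0 1 2 4 5 + w 2 3 4 5 6, -w 0 1 3 4 5 + w 0 2 3 4 6 + w 1 2 3 5 6,
    w 0 1 3 4 6 + w 0 2 3 4 5 + w 1 2 4 5 6, w 0 1 3 5 6 - w 0 2 4 5 6 + w 1 2 3 4 5,
    -w 0 1 4 5 6 - w 0 2 3 5 6 + w 1 2 3 4 6]

theorem contractLeft_ι_mul_ι_mul_ι (d : Module.Dual R M) (x y z : M) :
    contractLeft d (ι R x * ι R y * ι R z) =
      d x • (ι R y * ι R z) - d y • (ι R x * ι R z) + d z • (ι R x * ι R y) := by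
  simp only [mul_assoc, contractLeft_ι_mul, contractLeft_ι, mul_sub, mul_smul_comm,
    Algebra.algebraMap_eq_smul_one, mul_one]
  abel

theorem contractLeft_g2Form (d : Module.Dual R M) (u : Fin 7 → M) :
    contractLeft d (g2Form R u) = ∑ i, d (u i) • g2TwoForm u i := by
  simp only [g2Form, map_add, map_sub, contractLeft_ι_mul_ι_mul_ι, Fin.sum_univ_seven, g2TwoForm,
    Matrix.cons_val_zero, Matrix.cons_val_one, Matrix.cons_val]
  module

theorem g2TwoForm_mul_g2Form (u : Fin 7 → M) (i : Fin 7) :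
    g2TwoForm u i * g2Form R u = (2 : R) • g2FiveForm u i := by
  -- the guard `j < i` orients the rewrites, so `simp` sorts every monomial increasingly
  have swap : ∀ i j : Fin 7, j < i → ι R (u i) * ι R (u j) = -(ι R (u j) * ι R (u i)) :=
    fun i j _ => ι_mul_ι_swap _ _
  have swap' : ∀ i j : Fin 7, j < i → ∀ z,
      ι R (u i) * (ι R (u j) * z) = -(ι R (u j) * (ι R (u i) * z)) :=
    fun i j _ => ι_mul_ι_mul_swap _ _
  fin_cases i <;>
  simp only [Fin.reduceLT, Fin.zero_eta, Fin.reduceFinMk, g2TwoForm, g2FiveForm, g2Form,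
    Matrix.cons_val, Matrix.cons_val_zero, Matrix.cons_val_one, Fin.isValue,
    mul_add, add_mul, mul_sub, sub_mul, mul_assoc, neg_mul, mul_neg, neg_neg,
    ι_mul_ι_mul_self, swap, swap', mul_zero, neg_zero, add_zero, zero_add, sub_zero, zero_sub,
    ι_sq_zero] <;>
  module

set_option maxHeartbeats 1000000 in
theorem g2TwoForm_mul_g2FiveForm (u : Fin 7 → M) (i j : Fin 7) :
    g2TwoForm u i * g2FiveForm u j = (if i = j then 3 else 0 : R) • ιMulti R 7 u := by
  have swap : ∀ i j : Fin 7, j < i → ι R (u i) * ι R (u j) = -(ι R (u j) * ι R (u i)) :=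
    fun i j _ => ι_mul_ι_swap _ _
  have swap' : ∀ i j : Fin 7, j < i → ∀ z,
      ι R (u i) * (ι R (u j) * z) = -(ι R (u j) * (ι R (u i) * z)) :=
    fun i j _ => ι_mul_ι_mul_swap _ _
  simp only [ιMulti_apply, List.ofFn_succ, List.ofFn_zero, List.prod_cons, List.prod_nil, mul_one]
  fin_cases i <;> fin_cases j <;>
  simp only [Fin.reduceLT, Fin.zero_eta, Fin.reduceSucc, Fin.reduceFinMk, g2TwoForm, g2FiveForm,
    Matrix.cons_val, Matrix.cons_val_zero, Matrix.cons_val_one, Fin.isValue,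
    mul_add, add_mul, mul_sub, sub_mul, mul_assoc, neg_mul, mul_neg, neg_neg,
    ι_mul_ι_mul_self, swap, swap', mul_zero, neg_zero, add_zero, zero_add, sub_zero, zero_sub,
    ι_sq_zero, Fin.reduceEq, ↓reduceIte, zero_smul] <;>
  module

theorem g2TwoForm_mul_g2TwoForm_mul_g2Form (u : Fin 7 → M) (i j : Fin 7) :
    g2TwoForm u i * (g2TwoForm u j * g2Form R u) = (if i = j then 6 else 0 : R) • ιMulti R 7 u := by
  rw [g2TwoForm_mul_g2Form, mul_smul_comm, g2TwoForm_mul_g2FiveForm, smul_smul]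
  split_ifs <;> norm_num

theorem contractLeft_g2Form_mul_contractLeft_g2Form_mul_g2Form (g h : Module.Dual R M)
    (u : Fin 7 → M) :
    contractLeft g (g2Form R u) * (contractLeft h (g2Form R u) * g2Form R u) =
      (6 * ∑ i, g (u i) * h (u i)) • ιMulti R 7 u := by
  simp only [contractLeft_g2Form, Finset.sum_mul, Finset.mul_sum, smul_mul_assoc, mul_smul_comm,
    g2TwoForm_mul_g2TwoForm_mul_g2Form, smul_smul, ← Finset.sum_smul]
  congr 1
  simp only [mul_ite, mul_zero, Finset.sum_ite_eq', Finset.mem_univ, if_true]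
  exact Finset.sum_congr rfl fun i _ => by ring

theorem map_g2Form {N : Type*} [AddCommGroup N] [Module R N] (f : M →ₗ[R] N) (u : Fin 7 → M) :
    ExteriorAlgebra.map f (g2Form R u) = g2Form R (f ∘ u) := by
  simp only [g2Form, map_add, map_sub, map_mul, ExteriorAlgebra.map_apply_ι, Function.comp_apply]

variable (R) in
/-- The coefficient of `e₀ ∧ ⋯ ∧ eₙ₋₁`; it vanishes on all other homogeneous components. -/
noncomputable def topCoeff (n : ℕ) : ExteriorAlgebra R (Fin n → R) →ₗ[R] R :=
  liftAlternating fun k => if h : k = n then h ▸ Matrix.detRowAlternating else 0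

theorem topCoeff_ιMulti {n : ℕ} (v : Fin n → Fin n → R) :
    topCoeff R n (ιMulti R n v) = (Matrix.of v).det := by
  rw [topCoeff, liftAlternating_apply_ιMulti, dif_pos rfl]
  rfl

theorem det_smul_mul_transpose_eq_one_of_map_g2Form [IsDomain R] [CharZero R]
    (f : (Fin 7 → R) →ₗ[R] Fin 7 → R)
    (hf : ExteriorAlgebra.map f (g2Form R (Pi.single · 1)) = g2Form R (Pi.single · 1)) :
    LinearMap.det f • (LinearMap.toMatrix' f * (LinearMap.toMatrix' f)ᵀ) = 1 := by
  set s : Fin 7 → Fin 7 → R := (Pi.single · 1)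
  have hs : Matrix.of s = 1 := by
    ext i j
    simp [s, Pi.single_apply, Matrix.one_apply, eq_comm]
  have hfs : Matrix.of (f ∘ s) = (LinearMap.toMatrix' f)ᵀ := by
    ext i j
    simp [s, LinearMap.toMatrix'_apply]
  have hg2 : g2Form R (f ∘ s) = g2Form R s := by rw [← map_g2Form, hf]
  ext a b
  have h := congrArg (topCoeff R 7) (contractLeft_g2Form_mul_contractLeft_g2Form_mul_g2Form
    (LinearMap.proj a) (LinearMap.proj b) (f ∘ s))
  rw [hg2, contractLeft_g2Form_mul_contractLeft_g2Form_mul_g2Form, map_smul, map_smul,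
    topCoeff_ιMulti, topCoeff_ιMulti, hs, hfs, Matrix.det_one, Matrix.det_transpose,
    LinearMap.det_toMatrix', smul_eq_mul, smul_eq_mul, mul_one] at h
  have hs_sum : ∑ i, s i a * s i b = (1 : Matrix (Fin 7) (Fin 7) R) a b := by
    simp [s, Pi.single_apply, Matrix.one_apply]
  have hfs_sum : ∑ i, (f ∘ s) i a * (f ∘ s) i b =
      (LinearMap.toMatrix' f * (LinearMap.toMatrix' f)ᵀ) a b := by
    simp [s, Matrix.mul_apply, LinearMap.toMatrix'_apply]
  simp only [LinearMap.proj_apply, hs_sum, hfs_sum] at h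
  rw [Matrix.smul_apply, smul_eq_mul, mul_comm]
  exact mul_left_cancel₀ (by norm_num : (6 : R) ≠ 0) ((mul_assoc _ _ _).symm.trans h.symm)

theorem Matrix.mem_specialOrthogonalGroup_of_det_smul_mul_transpose_eq_one {n S : Type*}
    [Fintype n] [DecidableEq n] [CommRing S] [LinearOrder S] [IsStrictOrderedRing S]
    (hn : Odd (Fintype.card n)) {A : Matrix n n S} (hA : A.det • (A * Aᵀ) = 1) :
    A ∈ Matrix.specialOrthogonalGroup n S := by
  have h := congrArg Matrix.det hA
  rw [Matrix.det_smul, Matrix.det_mul, Matrix.det_transpose, Matrix.det_one, ← pow_two,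
    ← pow_add] at h
  have hdet : A.det = 1 := (hn.add_even even_two).pow_inj.1 (h.trans (one_pow _).symm)
  rw [hdet, one_smul] at hA
  exact Matrix.mem_specialOrthogonalGroup_iff.2 ⟨(Matrix.mem_orthogonalGroup_iff _ _).2 hA, hdet⟩

theorem Matrix.dotProduct_mulVec_mulVec_of_mem_orthogonalGroup {n S : Type*} [Fintype n]
    [DecidableEq n] [CommRing S] {A : Matrix n n S} (hA : A ∈ Matrix.orthogonalGroup n S)
    (v w : n → S) : A *ᵥ v ⬝ᵥ A *ᵥ w = v ⬝ᵥ w := by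
  rw [Matrix.dotProduct_mulVec, Matrix.vecMul_mulVec, (Matrix.mem_orthogonalGroup_iff' _ _).1 hA,
    Matrix.vecMul_one]

theorem stmt10 (A : (Fin 7 → ℝ) ≃ₗ[ℝ] (Fin 7 → ℝ))
    (hA : ExteriorAlgebra.map (A.toLinearMap) φ₀ = φ₀) :
    (∀ v w : Fin 7 → ℝ, ∑ i, A v i * A w i = ∑ i, v i * w i) ∧
    LinearMap.det A.toLinearMap = 1 := by
  have hφ₀ : φ₀ = g2Form ℝ (Pi.single · 1) := rfl
  have hSO := Matrix.mem_specialOrthogonalGroup_of_det_smul_mul_transpose_eq_one (by decide)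
    (LinearMap.det_toMatrix' A.toLinearMap ▸
      det_smul_mul_transpose_eq_one_of_map_g2Form A.toLinearMap (hφ₀ ▸ hA))
  obtain ⟨horth, hdet⟩ := Matrix.mem_specialOrthogonalGroup_iff.1 hSO
  refine ⟨fun v w => ?_, LinearMap.det_toMatrix' A.toLinearMap ▸ hdet⟩
  have h := Matrix.dotProduct_mulVec_mulVec_of_mem_orthogonalGroup horth v w
  rwa [LinearMap.toMatrix'_mulVec, LinearMap.toMatrix'_mulVec] at h
end
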